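/- Let m₀ ∈ L^∞(Ω) with ∫_Ω m₀ dx > 0 and |{m₀ < 0}| > 0, let γ ∈ (0,|Ω|) satisfy ∫_γ^{|Ω|} m₀* ds = 0 and let m̄₀ be as above. Then for every nonnegative m ∈ L^∞(Ω) with m ≺ m₀, one has |{x : m̄₀(x) > 0}| ≤ |{x : m(x) > 0}|. -/

import Mathlib

open MeasureTheory Set Filter Topology
open scoped ENNReal

noncomputable section

/-- Distribution function `d_f(t) = |{x ∈ Ω : f x > t}|`. -/
def distrib {N : ℕ} (Ω : Set (Fin N → ℝ)) (f : (Fin N → ℝ) → ℝ) (t : ℝ) : ℝ≥0∞ :=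
  volume {x ∈ Ω | t < f x}

/-- Equimeasurability of two functions on `Ω`. -/
def EquiMeas {N : ℕ} (Ω : Set (Fin N → ℝ)) (f g : (Fin N → ℝ) → ℝ) : Prop :=
  ∀ t : ℝ, distrib Ω f t = distrib Ω g t

/-- Decreasing rearrangement `f*(s) = sup {t : d_f(t) > s}`. -/
def decRearr {N : ℕ} (Ω : Set (Fin N → ℝ)) (f : (Fin N → ℝ) → ℝ) (s : ℝ) : ℝ :=
  sSup {t : ℝ | ENNReal.ofReal s < distrib Ω f t}

/-- Hardy–Littlewood–Pólya order `g ≺ f`. -/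
def Prec {N : ℕ} (Ω : Set (Fin N → ℝ)) (g f : (Fin N → ℝ) → ℝ) : Prop :=
  (∀ t ∈ Icc (0 : ℝ) (volume Ω).toReal,
      ∫ s in Ioo (0 : ℝ) t, decRearr Ω g s ≤ ∫ s in Ioo (0 : ℝ) t, decRearr Ω f s) ∧
  ∫ s in Ioo (0 : ℝ) (volume Ω).toReal, decRearr Ω g s
    = ∫ s in Ioo (0 : ℝ) (volume Ω).toReal, decRearr Ω f s

/-
Write `φ = m₀*` and `ψ = m*`, and suppose `|{m > 0}| = b < |{m̄₀ > 0}|`. Since `m ≥ 0`, `ψ`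
vanishes on `[b, |Ω|)`, so `m ≺ m₀` gives `∫₀^{|Ω|} φ = ∫₀^{|Ω|} ψ = ∫₀^b ψ ≤ ∫₀^b φ`, i.e.
`∫_b^{|Ω|} φ ≤ 0`. On the other hand `φ` is nonincreasing with `∫_γ^{|Ω|} φ = 0`, hence `φ ≥ 0` on
`(0, γ]`, and `φ = m̄₀* > 0` just to the right of `b` because `b < |{m̄₀ > 0}| ≤ |E| = γ`.
Therefore `∫_b^{|Ω|} φ = ∫_b^γ φ > 0`.
-/

section RealIntegrals

variable {φ : ℝ → ℝ}

lemma nonneg_of_antitoneOn_of_setIntegral_Ioo_eq_zero {a s γ T : ℝ} (hφ : AntitoneOn φ (Ioo a T))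
    (hint : IntegrableOn φ (Ioo γ T)) (h0 : ∫ x in Ioo γ T, φ x = 0) (has : a < s) (hsγ : s ≤ γ)
    (hγT : γ < T) : 0 ≤ φ s := by
  by_contra! hneg
  have hle : ∫ x in Ioo γ T, φ x ≤ ∫ _ in Ioo γ T, φ s :=
    setIntegral_mono_on hint (integrableOn_const (by simp)) measurableSet_Ioo fun x hx =>
      hφ ⟨has, hsγ.trans_lt hγT⟩ ⟨has.trans_le (hsγ.trans hx.1.le), hx.2⟩ (hsγ.trans hx.1.le)
  rw [h0, setIntegral_const, Real.volume_real_Ioo_of_le hγT.le, smul_eq_mul] at hle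
  linarith [mul_neg_of_pos_of_neg (sub_pos.2 hγT) hneg]

lemma setIntegral_Ioo_pos_of_antitoneOn {b c γ T : ℝ} (hφ : AntitoneOn φ (Ioo b T))
    (hint : IntegrableOn φ (Ioo b T)) (h0 : ∫ x in Ioo γ T, φ x = 0) (hbc : b < c) (hcγ : c ≤ γ)
    (hγT : γ < T) (hc : 0 < φ c) : 0 < ∫ x in Ioo b T, φ x := by
  have hφγ : ∀ x ∈ Ioc b γ, 0 ≤ φ x := fun x hx =>
    nonneg_of_antitoneOn_of_setIntegral_Ioo_eq_zero hφ
      (hint.mono_set (Ioo_subset_Ioo_left (hbc.le.trans hcγ))) h0 hx.1 hx.2 hγT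
  have hint_γ : IntegrableOn φ (Ioc b γ) := hint.mono_set (Ioc_subset_Ioo_right hγT)
  have hsplit : ∫ x in Ioo b T, φ x = (∫ x in Ioc b γ, φ x) + ∫ x in Ioo γ T, φ x := by
    rw [← Ioc_union_Ioo_eq_Ioo (hbc.le.trans hcγ) hγT, setIntegral_union
      (Ioc_disjoint_Ioi_same.mono_right Ioo_subset_Ioi_self) measurableSet_Ioo hint_γ
      (hint.mono_set (Ioo_subset_Ioo_left (hbc.le.trans hcγ)))]
  have hlow : (c - b) * φ c ≤ ∫ x in Ioc b c, φ x := by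
    have h := setIntegral_ge_of_const_le measurableSet_Ioc (by simp)
      (fun x hx => hφ ⟨hx.1, hx.2.trans_lt (hcγ.trans_lt hγT)⟩ ⟨hbc, hcγ.trans_lt hγT⟩ hx.2)
      (hint_γ.mono_set (Ioc_subset_Ioc_right hcγ))
    rwa [Real.volume_real_Ioc_of_le hbc.le, smul_eq_mul] at h
  have hmono : ∫ x in Ioc b c, φ x ≤ ∫ x in Ioc b γ, φ x :=
    setIntegral_mono_set hint_γ ((ae_restrict_iff' measurableSet_Ioc).2 (ae_of_all _ hφγ))
      (Ioc_subset_Ioc_right hcγ).eventuallyLE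
  rw [hsplit, h0, add_zero]
  linarith [mul_pos (sub_pos.2 hbc) hc]

end RealIntegrals

lemma ENNReal.ofReal_lt_of_lt_toReal {a : ℝ} {b : ℝ≥0∞} (ha : 0 ≤ a) (h : a < b.toReal) :
    ENNReal.ofReal a < b :=
  ((ENNReal.ofReal_lt_ofReal_iff (ha.trans_lt h)).2 h).trans_le ENNReal.ofReal_toReal_le

section Rearrangement

variable {N : ℕ} {Ω : Set (Fin N → ℝ)} {f : (Fin N → ℝ) → ℝ}

lemma distrib_antitone : Antitone (distrib Ω f) := fun _ _ h =>
  measure_mono fun _ hx => ⟨hx.1, h.trans_lt hx.2⟩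

lemma distrib_eq_zero_of_ae_le (hΩ : MeasurableSet Ω) {C t : ℝ}
    (hf : ∀ᵐ x ∂volume.restrict Ω, f x ≤ C) (ht : C ≤ t) : distrib Ω f t = 0 := by
  refine measure_eq_zero_iff_ae_notMem.2 ?_
  filter_upwards [(ae_restrict_iff' hΩ).1 hf] with x hx hmem
  exact (hx hmem.1).not_gt (ht.trans_lt hmem.2)

lemma distrib_eq_volume_of_ae_lt (hΩ : MeasurableSet Ω) {t : ℝ}
    (hf : ∀ᵐ x ∂volume.restrict Ω, t < f x) : distrib Ω f t = volume Ω := by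
  refine measure_congr (ae_eq_set.2 ⟨by simp [sdiff_eq_empty.2 (sep_subset _ _)], ?_⟩)
  refine measure_eq_zero_iff_ae_notMem.2 ?_
  filter_upwards [(ae_restrict_iff' hΩ).1 hf] with x hx hmem
  exact hmem.2 ⟨hmem.1, hx hmem.1⟩

lemma exists_gt_lt_distrib {a : ℝ≥0∞} {t : ℝ} (h : a < distrib Ω f t) :
    ∃ t' > t, a < distrib Ω f t' := by
  have hU : {x ∈ Ω | t < f x} = ⋃ n : ℕ, {x ∈ Ω | t + 1 / ((n : ℝ) + 1) < f x} := by
    ext x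
    simp only [mem_sep_iff, mem_iUnion]
    refine ⟨fun ⟨hx, htx⟩ => ?_, fun ⟨n, hx, hn⟩ => ⟨hx, lt_trans (by simp; positivity) hn⟩⟩
    obtain ⟨n, hn⟩ := exists_nat_one_div_lt (sub_pos.2 htx)
    exact ⟨n, hx, by linarith⟩
  have hmono : Monotone fun n : ℕ => {x ∈ Ω | t + 1 / ((n : ℝ) + 1) < f x} :=
    fun i j hij x hx =>
      ⟨hx.1, lt_of_le_of_lt ((add_le_add_iff_left t).2 (Nat.one_div_le_one_div hij)) hx.2⟩
  rw [distrib, hU, hmono.measure_iUnion, lt_iSup_iff] at h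
  obtain ⟨n, hn⟩ := h
  exact ⟨t + 1 / ((n : ℝ) + 1), by simp; positivity, hn⟩

lemma lt_of_lt_distrib (hΩ : MeasurableSet Ω) {C t : ℝ} {a : ℝ≥0∞}
    (hf : ∀ᵐ x ∂volume.restrict Ω, f x ≤ C) (h : a < distrib Ω f t) : t < C :=
  not_le.1 fun hCt => by simp [distrib_eq_zero_of_ae_le hΩ hf hCt] at h

lemma bddAbove_setOf_lt_distrib (hΩ : MeasurableSet Ω) {C : ℝ}
    (hf : ∀ᵐ x ∂volume.restrict Ω, f x ≤ C) (s : ℝ) :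
    BddAbove {t : ℝ | ENNReal.ofReal s < distrib Ω f t} :=
  ⟨C, fun _ ht => (lt_of_lt_distrib hΩ hf ht).le⟩

lemma decRearr_le (hΩ : MeasurableSet Ω) {C : ℝ} (hf : ∀ᵐ x ∂volume.restrict Ω, f x ≤ C)
    (hC : 0 ≤ C) (s : ℝ) : decRearr Ω f s ≤ C :=
  Real.sSup_le (fun _ ht => (lt_of_lt_distrib hΩ hf ht).le) hC

lemma le_decRearr (hΩ : MeasurableSet Ω) {C L s : ℝ} (hfC : ∀ᵐ x ∂volume.restrict Ω, f x ≤ C)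
    (hLf : ∀ᵐ x ∂volume.restrict Ω, L ≤ f x) (hs : ENNReal.ofReal s < volume Ω) :
    L ≤ decRearr Ω f s := by
  have hsub : Iio L ⊆ {t : ℝ | ENNReal.ofReal s < distrib Ω f t} := fun t ht => by
    show ENNReal.ofReal _ < _
    rwa [distrib_eq_volume_of_ae_lt hΩ (hLf.mono fun x hx => lt_of_lt_of_le ht hx)]
  rw [← csSup_Iio (a := L)]
  exact csSup_le_csSup (bddAbove_setOf_lt_distrib hΩ hfC s) nonempty_Iio hsub

lemma decRearr_antitoneOn (hΩ : MeasurableSet Ω) {C L : ℝ}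
    (hfC : ∀ᵐ x ∂volume.restrict Ω, f x ≤ C) (hLf : ∀ᵐ x ∂volume.restrict Ω, L ≤ f x) :
    AntitoneOn (decRearr Ω f) {s | ENNReal.ofReal s < volume Ω} := by
  intro s₁ _ s₂ hs₂ h
  refine csSup_le_csSup (bddAbove_setOf_lt_distrib hΩ hfC s₁) ⟨L - 1, ?_⟩
    fun t ht => (ENNReal.ofReal_le_ofReal h).trans_lt ht
  show ENNReal.ofReal _ < _
  rw [distrib_eq_volume_of_ae_lt hΩ (hLf.mono fun x hx => by linarith)]
  exact hs₂

lemma lt_decRearr_of_lt_distrib (hΩ : MeasurableSet Ω) {C s t : ℝ}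
    (hf : ∀ᵐ x ∂volume.restrict Ω, f x ≤ C) (h : ENNReal.ofReal s < distrib Ω f t) :
    t < decRearr Ω f s := by
  obtain ⟨t', htt', ht'⟩ := exists_gt_lt_distrib h
  exact htt'.trans_le (le_csSup (bddAbove_setOf_lt_distrib hΩ hf s) ht')

lemma decRearr_eq_zero_of_ae_nonneg (hΩ : MeasurableSet Ω) {s : ℝ}
    (hf : ∀ᵐ x ∂volume.restrict Ω, 0 ≤ f x) (h0 : distrib Ω f 0 ≤ ENNReal.ofReal s)
    (hs : ENNReal.ofReal s < volume Ω) : decRearr Ω f s = 0 := by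
  have hset : {t : ℝ | ENNReal.ofReal s < distrib Ω f t} = Iio 0 := by
    ext t
    refine ⟨fun ht => not_le.1 fun h0t => (ht.trans_le ((distrib_antitone h0t).trans h0)).false,
      fun ht => ?_⟩
    show ENNReal.ofReal _ < _
    rwa [distrib_eq_volume_of_ae_lt hΩ (hf.mono fun x hx => ht.trans_le hx)]
  rw [decRearr, hset, csSup_Iio]

lemma integrableOn_decRearr (hΩ : MeasurableSet Ω) {C : ℝ}
    (hf : ∀ᵐ x ∂volume.restrict Ω, |f x| ≤ C) :
    IntegrableOn (decRearr Ω f) (Ioo 0 (volume Ω).toReal) := by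
  have hfC : ∀ᵐ x ∂volume.restrict Ω, f x ≤ max C 0 :=
    hf.mono fun x hx => (le_abs_self _).trans (hx.trans (le_max_left _ _))
  have hLf : ∀ᵐ x ∂volume.restrict Ω, -max C 0 ≤ f x :=
    hf.mono fun x hx => (neg_le_neg (hx.trans (le_max_left _ _))).trans (neg_abs_le _)
  have hsub : Ioo 0 (volume Ω).toReal ⊆ {s | ENNReal.ofReal s < volume Ω} := fun s hs =>
    ENNReal.ofReal_lt_of_lt_toReal hs.1.le hs.2
  refine IntegrableOn.of_bound (by simp) (aemeasurable_restrict_of_antitoneOn measurableSet_Ioo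
    ((decRearr_antitoneOn hΩ hfC hLf).mono hsub)).aestronglyMeasurable (max C 0)
    ((ae_restrict_iff' measurableSet_Ioo).2 (ae_of_all _ fun s hs => ?_))
  rw [Real.norm_eq_abs, abs_le]
  exact ⟨le_decRearr hΩ hfC hLf (hsub hs), decRearr_le hΩ hfC (le_max_right _ _) s⟩

lemma setIntegral_Ioo_decRearr_nonpos_of_prec {g : (Fin N → ℝ) → ℝ} {b : ℝ}
    (hprec : Prec Ω g f) (hint : IntegrableOn (decRearr Ω f) (Ioo 0 (volume Ω).toReal))
    (hb : 0 ≤ b) (hbT : b < (volume Ω).toReal)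
    (hg : ∀ s ∈ Ico b (volume Ω).toReal, decRearr Ω g s = 0) :
    ∫ s in Ioo b (volume Ω).toReal, decRearr Ω f s ≤ 0 := by
  set T := (volume Ω).toReal
  have hg_int : ∫ s in Ioo 0 T, decRearr Ω g s = ∫ s in Ioo 0 b, decRearr Ω g s :=
    setIntegral_eq_of_subset_of_forall_sdiff_eq_zero measurableSet_Ioo
      (Ioo_subset_Ioo_right hbT.le) fun s hs => hg s ⟨not_lt.1 fun h => hs.2 ⟨hs.1.1, h⟩, hs.1.2⟩
  have hsplit : ∫ s in Ioo 0 T, decRearr Ω f s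
      = (∫ s in Ioo 0 b, decRearr Ω f s) + ∫ s in Ioo b T, decRearr Ω f s := by
    rw [← Ioc_union_Ioo_eq_Ioo hb hbT, setIntegral_union
      (Ioc_disjoint_Ioi_same.mono_right Ioo_subset_Ioi_self) measurableSet_Ioo
      (hint.mono_set (Ioc_subset_Ioo_right hbT)) (hint.mono_set (Ioo_subset_Ioo_left hb)),
      integral_Ioc_eq_integral_Ioo]
  linarith [hprec.1 b ⟨hb, hbT.le⟩, hprec.2]

end Rearrangement

theorem truncated_weight_minimal_support_general
    (N : ℕ) (Ω : Set (Fin N → ℝ)) (hΩo : IsOpen Ω)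
    (m₀ : (Fin N → ℝ) → ℝ)
    (hm₀b : ∃ C : ℝ, ∀ᵐ x ∂(volume.restrict Ω), |m₀ x| ≤ C)
    (γ : ℝ) (hγ : γ ∈ Ioo (0 : ℝ) (volume Ω).toReal)
    (hγ0 : ∫ s in Ioo γ (volume Ω).toReal, decRearr Ω m₀ s = 0)
    (E : Set (Fin N → ℝ))
    (hEvol : volume E = ENNReal.ofReal γ)
    (hE1 : ∀ s ∈ Ioo (0 : ℝ) γ, decRearr Ω (E.indicator m₀) s = decRearr Ω m₀ s)
    (m : (Fin N → ℝ) → ℝ)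
    (hmnonneg : ∀ᵐ x ∂(volume.restrict Ω), 0 ≤ m x)
    (hprec : Prec Ω m m₀) :
    volume {x ∈ Ω | 0 < E.indicator m₀ x} ≤ volume {x ∈ Ω | 0 < m x} := by
  obtain ⟨C, hC⟩ := hm₀b
  have hΩ : MeasurableSet Ω := hΩo.measurableSet
  have hint := integrableOn_decRearr hΩ hC
  have hanti := decRearr_antitoneOn hΩ (hC.mono fun x hx => (le_abs_self _).trans hx)
    (hC.mono fun x hx => neg_le_of_abs_le hx)
  by_contra! hlt
  have hAγ : volume {x ∈ Ω | 0 < E.indicator m₀ x} ≤ ENNReal.ofReal γ :=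
    hEvol ▸ measure_mono fun x hx => mem_of_indicator_ne_zero hx.2.ne'
  obtain ⟨c, -, hBc, hcA⟩ := ENNReal.lt_iff_exists_real_btwn.1 hlt
  set b := (volume {x ∈ Ω | 0 < m x}).toReal
  have hb : 0 ≤ b := ENNReal.toReal_nonneg
  have hbc : b < c := ENNReal.toReal_lt_of_lt_ofReal hBc
  have hcγ : c < γ := (ENNReal.ofReal_lt_ofReal_iff hγ.1).1 (hcA.trans_le hAγ)
  have hφc : 0 < decRearr Ω m₀ c := hE1 c ⟨hb.trans_lt hbc, hcγ⟩ ▸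
    lt_decRearr_of_lt_distrib hΩ (hC.mono fun x hx =>
      (le_abs_self _).trans ((norm_indicator_le_norm_self m₀ x).trans hx)) hcA
  have hψ : ∀ s ∈ Ico b (volume Ω).toReal, decRearr Ω m s = 0 := fun s hs =>
    decRearr_eq_zero_of_ae_nonneg hΩ hmnonneg
      ((ENNReal.le_ofReal_iff_toReal_le (hBc.trans ENNReal.ofReal_lt_top).ne (hb.trans hs.1)).2
        hs.1)
      (ENNReal.ofReal_lt_of_lt_toReal (hb.trans hs.1) hs.2)
  have hbT : b < (volume Ω).toReal := hbc.trans (hcγ.trans hγ.2)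
  exact (setIntegral_Ioo_decRearr_nonpos_of_prec hprec hint hb hbT hψ).not_gt
    (setIntegral_Ioo_pos_of_antitoneOn
      (hanti.mono fun s hs => ENNReal.ofReal_lt_of_lt_toReal (hb.trans hs.1.le) hs.2)
      (hint.mono_set (Ioo_subset_Ioo_left hb)) hγ0 hbc hcγ.le hγ.2 hφc)

theorem truncated_weight_minimal_support
    (N : ℕ) (Ω : Set (Fin N → ℝ)) (hΩo : IsOpen Ω) (hΩb : Bornology.IsBounded Ω)
    (m₀ : (Fin N → ℝ) → ℝ) (hm₀ : Measurable m₀)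
    (hm₀b : ∃ C : ℝ, ∀ᵐ x ∂(volume.restrict Ω), |m₀ x| ≤ C)
    (hm₀int : 0 < ∫ x in Ω, m₀ x)
    (hm₀neg : 0 < volume {x ∈ Ω | m₀ x < 0})
    (γ : ℝ) (hγ : γ ∈ Ioo (0 : ℝ) (volume Ω).toReal)
    (hγ0 : ∫ s in Ioo γ (volume Ω).toReal, decRearr Ω m₀ s = 0)
    (E : Set (Fin N → ℝ)) (hE : MeasurableSet E) (hEΩ : E ⊆ Ω)
    (hEvol : volume E = ENNReal.ofReal γ)
    (hE1 : ∀ s ∈ Ioo (0 : ℝ) γ, decRearr Ω (E.indicator m₀) s = decRearr Ω m₀ s)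
    (hE2 : ∀ s ∈ Ico γ (volume Ω).toReal, decRearr Ω (E.indicator m₀) s = 0)
    (m : (Fin N → ℝ) → ℝ) (hm : Measurable m)
    (hmb : ∃ C : ℝ, ∀ᵐ x ∂(volume.restrict Ω), |m x| ≤ C)
    (hmnonneg : ∀ᵐ x ∂(volume.restrict Ω), 0 ≤ m x)
    (hprec : Prec Ω m m₀) :
    volume {x ∈ Ω | 0 < E.indicator m₀ x} ≤ volume {x ∈ Ω | 0 < m x} :=
  truncated_weight_minimal_support_general N Ω hΩo m₀ hm₀b γ hγ hγ0 E hEvol hE1 m hmnonneg hprec
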